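/- Let Γ be a connected, locally finite simple graph and let G be a group acting freely on Γ by automorphisms with only finitely many orbits of vertices. Then G is finitely generated, and for every finite generating set S of G there is a bijection between the end space of Γ and the end space of the Cayley graph Γ(G,S); that is, e(Γ) = e(G). -/

import Mathlib

/-- The Cayley graph of a group `G` with respect to a set `S ⊆ G`:
two distinct elements `g h` are adjacent iff `g⁻¹ * h ∈ S ∪ S⁻¹`. -/
def cayleyGraph {G : Type*} [Group G] (S : Set G) : SimpleGraph G where
  Adj g h := g ≠ h ∧ g⁻¹ * h ∈ S ∪ S⁻¹
  symm := ⟨by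
    rintro g h ⟨hne, hmem⟩
    refine ⟨hne.symm, ?_⟩
    rcases hmem with h1 | h1
    · exact Or.inr (Set.mem_inv.mpr (by rwa [show (h⁻¹ * g)⁻¹ = g⁻¹ * h by group]))
    · have := Set.mem_inv.mp h1
      exact Or.inl (by rwa [show (g⁻¹ * h)⁻¹ = h⁻¹ * g by group] at this)⟩
  loopless := ⟨fun g h => h.1 rfl⟩

open SimpleGraph CategoryTheory Opposite

section helpers
variable {X : Type*} {G : SimpleGraph X}

lemma exists_walk_getVert_left {u v : X} (p : G.Walk u v) (i : ℕ) :
    ∃ q : G.Walk u (p.getVert i), q.length ≤ i := by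
  induction p generalizing i with
  | nil => exact ⟨.nil, by simp [SimpleGraph.Walk.getVert]⟩
  | cons h q ih =>
    cases i with
    | zero => exact ⟨.nil, le_of_eq rfl⟩
    | succ i =>
      obtain ⟨r, hr⟩ := ih i
      exact ⟨.cons h (r.copy rfl (by rw [SimpleGraph.Walk.getVert_cons_succ])), by
        simpa using Nat.succ_le_succ hr⟩

lemma exists_walk_getVert_right {u v : X} (p : G.Walk u v) (i : ℕ) :
    ∃ q : G.Walk (p.getVert i) v, q.length ≤ p.length - i := by
  induction p generalizing i with
  | nil => exact ⟨.nil, by simp⟩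
  | cons h q ih =>
    cases i with
    | zero =>
      exact ⟨(SimpleGraph.Walk.cons h q).copy (SimpleGraph.Walk.getVert_zero _).symm rfl, by simp⟩
    | succ i =>
      obtain ⟨r, hr⟩ := ih i
      exact ⟨r.copy (by rw [SimpleGraph.Walk.getVert_cons_succ]) rfl, by
        simpa using hr.trans (by simp [Nat.succ_sub_succ])⟩

lemma dist_getVert_left {u v : X} (p : G.Walk u v) (i : ℕ) :
    G.dist u (p.getVert i) ≤ i := by
  obtain ⟨q, hq⟩ := exists_walk_getVert_left p i
  exact (SimpleGraph.dist_le q).trans hq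

lemma dist_getVert_right {u v : X} (p : G.Walk u v) (i : ℕ) :
    G.dist (p.getVert i) v ≤ p.length - i := by
  obtain ⟨q, hq⟩ := exists_walk_getVert_right p i
  exact (SimpleGraph.dist_le q).trans hq

/-- balls are finite in a connected locally finite graph -/
lemma ball_finite (hc : G.Connected) (hlf : ∀ x : X, (G.neighborSet x).Finite)
    (v : X) : ∀ n : ℕ, {x : X | G.dist v x ≤ n}.Finite := by
  intro n
  induction n with
  | zero =>
    refine Set.Finite.subset (Set.finite_singleton v) ?_
    intro x hx
    simp only [Set.mem_setOf_eq, Nat.le_zero] at hx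
    simp [(hc.dist_eq_zero_iff).mp hx]
  | succ n ih =>
    refine Set.Finite.subset (ih.union (Set.Finite.biUnion ih (fun u _ => hlf u))) ?_
    intro x hx
    simp only [Set.mem_setOf_eq] at hx
    rcases Nat.lt_or_ge (G.dist v x) (n+1) with h | h
    · exact Or.inl (Nat.lt_succ_iff.mp h)
    · have hd : G.dist v x = n + 1 := le_antisymm hx h
      obtain ⟨p, hp⟩ := (hc v x).exists_walk_length_eq_dist
      have hadj := p.adj_getVert_succ (i := n) (by omega)
      rw [show n + 1 = p.length by omega, p.getVert_length] at hadj
      exact Or.inr (Set.mem_biUnion (by simpa using dist_getVert_left p n) hadj)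

/-- Lipschitz bound along a walk. -/
lemma dist_map_le_of_walk {Y : Type*} {H : SimpleGraph Y} (hYc : H.Connected)
    (f : X → Y) (C : ℕ) (hf : ∀ u v, G.Adj u v → H.dist (f u) (f v) ≤ C) :
    ∀ {u v : X} (p : G.Walk u v), H.dist (f u) (f v) ≤ C * p.length := by
  intro u v p
  induction p with
  | nil => simp
  | cons h q ih =>
    calc H.dist (f _) (f _) ≤ H.dist (f _) (f _) + H.dist (f _) (f _) := hYc.dist_triangle
    _ ≤ C + C * q.length := Nat.add_le_add (hf _ _ h) ih
    _ = C * (q.length + 1) := by ring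

lemma dist_map_le (hXc : G.Connected) {Y : Type*} {H : SimpleGraph Y} (hYc : H.Connected)
    (f : X → Y) (C : ℕ) (hf : ∀ u v, G.Adj u v → H.dist (f u) (f v) ≤ C)
    (u v : X) : H.dist (f u) (f v) ≤ C * G.dist u v := by
  obtain ⟨p, hp⟩ := (hXc u v).exists_walk_length_eq_dist
  simpa [hp] using dist_map_le_of_walk hYc f C hf p

/-- Walk with support avoiding K gives equal components. -/
lemma compMk_eq_of_walk {K : Set X} {u v : X} (p : G.Walk u v)
    (hp : ∀ w ∈ p.support, w ∉ K) :
    G.componentComplMk (hp u p.start_mem_support) = G.componentComplMk (hp v p.end_mem_support) := by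
  induction p with
  | nil => rfl
  | cons h q ih =>
    have h1 : ∀ w ∈ q.support, w ∉ K := fun w hw => hp w (by simp [hw])
    exact (G.componentComplMk_eq_of_adj _ _ h).trans (ih h1)

lemma compMk_eq_of_close (hc : G.Connected) {K : Set X} {c : ℕ} {u v : X}
    (hu : u ∉ K) (hv : v ∉ K) (hd : G.dist u v ≤ c) (hfar : ∀ k ∈ K, c < G.dist u k) :
    G.componentComplMk hu = G.componentComplMk hv := by
  classical
  obtain ⟨p, hp⟩ := (hc u v).exists_walk_length_eq_dist
  have hsupp : ∀ w ∈ p.support, w ∉ K := by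
    intro w hw hwK
    have h1 : G.dist u w ≤ p.length := (SimpleGraph.dist_le (p.takeUntil w hw)).trans
      (SimpleGraph.Walk.length_takeUntil_le p hw)
    exact absurd (hfar w hwK) (by omega)
  exact compMk_eq_of_walk p hsupp

end helpers

/-- A coarse equivalence between two connected locally finite graphs. -/
structure CoarsePair {X Y : Type*} (Gx : SimpleGraph X) (Gy : SimpleGraph Y) where
  f : X → Y
  g : Y → X
  C : ℕ
  hXc : Gx.Connected
  hYc : Gy.Connected
  hXlf : ∀ x, (Gx.neighborSet x).Finite
  hYlf : ∀ y, (Gy.neighborSet y).Finite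
  hf : ∀ u v, Gx.Adj u v → Gy.dist (f u) (f v) ≤ C
  hg : ∀ u v, Gy.Adj u v → Gx.dist (g u) (g v) ≤ C
  hgf : ∀ x, Gx.dist (g (f x)) x ≤ C
  hfg : ∀ y, Gy.dist (f (g y)) y ≤ C

namespace CoarsePair

variable {X Y : Type*} {Gx : SimpleGraph X} {Gy : SimpleGraph Y} (P : CoarsePair Gx Gy)

/-- The symmetric pair. -/
def symm : CoarsePair Gy Gx where
  f := P.g
  g := P.f
  C := P.C
  hXc := P.hYc
  hYc := P.hXc
  hXlf := P.hYlf
  hYlf := P.hXlf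
  hf := P.hg
  hg := P.hf
  hgf := P.hfg
  hfg := P.hgf

/-- The enlarged radius. -/
def C' : ℕ := P.C + P.C * P.C

lemma C_le_C' : P.C ≤ P.C' := Nat.le_add_right _ _

lemma CC_le_C' : P.C * P.C ≤ P.C' := Nat.le_add_left _ _

lemma dist_g_le (u v : Y) : Gx.dist (P.g u) (P.g v) ≤ P.C * Gy.dist u v :=
  dist_map_le P.hYc P.hXc P.g P.C P.hg u v

lemma dist_f_le (u v : X) : Gy.dist (P.f u) (P.f v) ≤ P.C * Gx.dist u v :=
  dist_map_le P.hXc P.hYc P.f P.C P.hf u v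

lemma hatSet_finite (K : Finset Y) : {x : X | ∃ k ∈ K, Gy.dist k (P.f x) ≤ P.C'}.Finite := by
  refine Set.Finite.subset (Set.Finite.biUnion K.finite_toSet
    (fun k _ => ball_finite P.hXc P.hXlf (P.g k) (P.C * P.C' + P.C))) ?_
  rintro x ⟨k, hk, hd⟩
  refine Set.mem_biUnion hk ?_
  have h1 : Gx.dist (P.g k) (P.g (P.f x)) ≤ P.C * P.C' :=
    (P.dist_g_le _ _).trans (Nat.mul_le_mul_left _ hd)
  have h2 := P.hgf x
  have := P.hXc.dist_triangle (u := P.g k) (v := P.g (P.f x)) (w := x)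
  simp only [Set.mem_setOf_eq]
  omega

/-- The "hat" of a finite vertex set of `Y`: vertices of `X` mapping `C'`-close to it. -/
noncomputable def hat (K : Finset Y) : Finset X := (P.hatSet_finite K).toFinset

lemma mem_hat {K : Finset Y} {x : X} : x ∈ P.hat K ↔ ∃ k ∈ K, Gy.dist k (P.f x) ≤ P.C' := by
  simp [hat, Set.Finite.mem_toFinset]

lemma hat_mono {K L : Finset Y} (h : K ⊆ L) : P.hat K ⊆ P.hat L := by
  intro x hx
  rw [mem_hat] at hx ⊢
  obtain ⟨k, hk, hd⟩ := hx
  exact ⟨k, h hk, hd⟩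

lemma f_not_mem {K : Finset Y} {x : X} (hx : x ∉ (P.hat K : Set X)) : P.f x ∉ (K : Set Y) := by
  intro hK
  exact hx (by rw [Finset.mem_coe, mem_hat]; exact ⟨P.f x, hK, by simp [SimpleGraph.dist_self]⟩)

lemma far_of_not_mem_hat {K : Finset Y} {x : X} (hx : x ∉ (P.hat K : Set X)) :
    ∀ k ∈ (K : Set Y), P.C' < Gy.dist (P.f x) k := by
  intro k hk
  by_contra h
  refine hx ?_
  rw [Finset.mem_coe, mem_hat]
  exact ⟨k, hk, by rw [SimpleGraph.dist_comm]; omega⟩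

/-- The induced map on component complements. -/
noncomputable def compMap (K : Finset Y) :
    Gx.ComponentCompl (P.hat K : Set X) → Gy.ComponentCompl (K : Set Y) :=
  ComponentCompl.lift (fun x hx => Gy.componentComplMk (P.f_not_mem hx))
    (by
      intro x x' hx hx' hadj
      refine compMk_eq_of_close P.hYc (c := P.C) _ (P.f_not_mem hx') (P.hf _ _ hadj) ?_
      intro k hk
      exact lt_of_le_of_lt P.C_le_C' (P.far_of_not_mem_hat hx k hk))

lemma compMap_mk {K : Finset Y} {x : X} (hx : x ∉ (P.hat K : Set X)) :
    P.compMap K (Gx.componentComplMk hx) = Gy.componentComplMk (P.f_not_mem hx) := rfl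

lemma compMap_hom {K L : Finset Y} (h : K ⊆ L) (D : Gx.ComponentCompl (P.hat L : Set X)) :
    (P.compMap L D).hom (Finset.coe_subset.mpr h) =
      P.compMap K (D.hom (Finset.coe_subset.mpr (P.hat_mono h))) := by
  refine ComponentCompl.ind (fun x hx => ?_) D
  rfl

/-- The induced map on ends. -/
noncomputable def endMap (e : Gx.end) : Gy.end := by
  refine ⟨fun K => P.compMap K.unop (e.val (op (P.hat K.unop))), ?_⟩
  intro K L h
  have hsub : L.unop ⊆ K.unop := le_of_op_hom h
  have hsec := e.prop (opHomOfLE (Finset.coe_subset.mp (Finset.coe_subset.mpr (P.hat_mono hsub))))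
  dsimp [componentComplFunctor] at hsec ⊢
  refine (P.compMap_hom hsub _).trans ?_
  exact congrArg _ hsec

end CoarsePair

lemma subset_hat_hat {X Y : Type*} {Gx : SimpleGraph X} {Gy : SimpleGraph Y}
    (P : CoarsePair Gx Gy) (K : Finset X) : K ⊆ P.hat (P.symm.hat K) := by
  intro k hk
  rw [CoarsePair.mem_hat]
  refine ⟨P.f k, ?_, by simp [SimpleGraph.dist_self]⟩
  rw [CoarsePair.mem_hat]
  refine ⟨k, hk, ?_⟩
  show Gx.dist k (P.g (P.f k)) ≤ P.symm.C'
  rw [SimpleGraph.dist_comm]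
  exact (P.hgf k).trans P.symm.C_le_C'

lemma CoarsePair.endMap_comp {X Y : Type*} {Gx : SimpleGraph X} {Gy : SimpleGraph Y}
    (P : CoarsePair Gx Gy) (e : Gx.end) : P.symm.endMap (P.endMap e) = e := by
  apply Subtype.ext
  funext K
  set K₀ : Finset X := K.unop with hK₀
  set L : Finset Y := P.symm.hat K₀ with hL
  set M : Finset X := P.hat L with hM
  have hKM : K₀ ⊆ M := subset_hat_hat P K₀
  obtain ⟨x, hx, hxe⟩ := (e.val (op M)).exists_eq_mk
  -- RHS : e.val K = componentComplMk x in X ∖ K₀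
  have hxK : x ∉ (K₀ : Set X) := Set.notMem_subset (Finset.coe_subset.mpr hKM) hx
  have hRHS : e.val K = Gx.componentComplMk hxK := by
    have hsec := e.prop (opHomOfLE hKM : op M ⟶ K)
    rw [← hsec, ← hxe]
    rfl
  have hfxL : P.f x ∉ (L : Set Y) := P.f_not_mem (K := L) hx
  have hgfxK : P.g (P.f x) ∉ (K₀ : Set X) := P.symm.f_not_mem (K := K₀) hfxL
  have hLHS : (P.symm.endMap (P.endMap e)).val K = Gx.componentComplMk hgfxK := by
    show P.symm.compMap K₀ (P.compMap L (e.val (op M))) = _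
    rw [← hxe]
    rfl
  rw [hLHS, hRHS]
  -- far condition at x
  have hfar : ∀ k ∈ (K₀ : Set X), P.C < Gx.dist x k := by
    intro k hk
    by_contra hle
    push_neg at hle
    have hfk : P.f k ∈ L := by
      rw [CoarsePair.mem_hat]
      refine ⟨k, hk, ?_⟩
      show Gx.dist k (P.g (P.f k)) ≤ P.symm.C'
      rw [SimpleGraph.dist_comm]
      exact (P.hgf k).trans P.symm.C_le_C'
    have h1 : Gy.dist (P.f x) (P.f k) ≤ P.C * Gx.dist x k := P.dist_f_le x k
    have h2 := P.far_of_not_mem_hat (K := L) hx (P.f k) (Finset.mem_coe.mpr hfk)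
    have h3 : P.C * Gx.dist x k ≤ P.C * P.C := Nat.mul_le_mul_left _ hle
    have h4 : P.C * P.C ≤ P.C' := P.CC_le_C'
    omega
  have hd : Gx.dist x (P.g (P.f x)) ≤ P.C := by
    rw [SimpleGraph.dist_comm]; exact P.hgf x
  exact (compMk_eq_of_close P.hXc hxK hgfxK hd hfar).symm

/-- Coarse equivalence induces a bijection on ends. -/
noncomputable def CoarsePair.endEquiv {X Y : Type*} {Gx : SimpleGraph X} {Gy : SimpleGraph Y}
    (P : CoarsePair Gx Gy) : Gx.end ≃ Gy.end where
  toFun := P.endMap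
  invFun := P.symm.endMap
  left_inv := P.endMap_comp
  right_inv := P.symm.endMap_comp


open SimpleGraph

section dist_iso
variable {X : Type*} {G : SimpleGraph X}

lemma dist_map_le' (hc : G.Connected) (φ : X → X) (hφ : ∀ u v, G.Adj u v → G.Adj (φ u) (φ v))
    (u v : X) : G.dist (φ u) (φ v) ≤ G.dist u v := by
  have h := dist_map_le hc hc φ 1 (fun u v h => by
    rw [SimpleGraph.dist_eq_one_iff_adj.mpr (hφ u v h)]) u v
  simpa using h

lemma dist_map_eq (hc : G.Connected) (φ ψ : X → X)
    (hφ : ∀ u v, G.Adj u v → G.Adj (φ u) (φ v)) (hψ : ∀ u v, G.Adj u v → G.Adj (ψ u) (ψ v))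
    (hinv : ∀ x, ψ (φ x) = x) (u v : X) : G.dist (φ u) (φ v) = G.dist u v := by
  refine le_antisymm (dist_map_le' hc φ hφ u v) ?_
  have := dist_map_le' hc ψ hψ (φ u) (φ v)
  rwa [hinv, hinv] at this

end dist_iso

section cayley
variable {G : Type*} [Group G] {S : Set G}

lemma cayley_adj_translate (a : G) {g h : G} (hadj : (cayleyGraph S).Adj g h) :
    (cayleyGraph S).Adj (a * g) (a * h) := by
  obtain ⟨hne, hmem⟩ := hadj
  exact ⟨by simpa using hne, by rwa [show (a*g)⁻¹ * (a*h) = g⁻¹ * h by group]⟩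

lemma cayley_reachable_one (hgen : Subgroup.closure S = ⊤) (g : G) :
    (cayleyGraph S).Reachable 1 g := by
  have hg : g ∈ Subgroup.closure S := hgen ▸ Subgroup.mem_top g
  induction hg using Subgroup.closure_induction with
  | mem s hs =>
    by_cases h1 : s = 1
    · rw [h1]
    · exact SimpleGraph.Adj.reachable ⟨Ne.symm h1, by simpa using Or.inl hs⟩
  | one => rfl
  | mul x y hx hy ihx ihy =>
    refine ihx.trans ?_
    have : (cayleyGraph S).Reachable (x * 1) (x * y) := by
      obtain ⟨p⟩ := ihy
      exact ⟨p.map ⟨(x * ·), fun h => cayley_adj_translate x h⟩⟩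
    simpa using this
  | inv x hx ihx =>
    have : (cayleyGraph S).Reachable (x⁻¹ * 1) (x⁻¹ * x) := by
      obtain ⟨p⟩ := ihx
      exact ⟨p.map ⟨(x⁻¹ * ·), fun h => cayley_adj_translate x⁻¹ h⟩⟩
    simpa using this.symm

lemma cayley_connected (hgen : Subgroup.closure S = ⊤) : (cayleyGraph S).Connected := by
  rw [SimpleGraph.connected_iff]
  exact ⟨fun g h => (cayley_reachable_one hgen g).symm.trans (cayley_reachable_one hgen h),
    ⟨1⟩⟩

lemma cayley_locallyFinite (hS : S.Finite) (v : G) :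
    ((cayleyGraph S).neighborSet v).Finite := by
  refine Set.Finite.subset (Set.Finite.image (v * ·) (hS.union hS.inv)) ?_
  rintro h ⟨hne, hmem⟩
  exact ⟨v⁻¹ * h, hmem, by group⟩

lemma cayley_dist_translate (hgen : Subgroup.closure S = ⊤) (a g h : G) :
    (cayleyGraph S).dist (a * g) (a * h) = (cayleyGraph S).dist g h :=
  dist_map_eq (cayley_connected hgen) (a * ·) (a⁻¹ * ·)
    (fun _ _ => cayley_adj_translate a) (fun _ _ => cayley_adj_translate a⁻¹)
    (fun x => by group) g h

end cayley
section action
open SimpleGraph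
variable {V G : Type*} [Group G] {Γ : SimpleGraph V} {act : G →* Equiv.Perm V}

lemma act_mul_apply (g h : G) (v : V) : act g (act h v) = act (g * h) v := by
  rw [map_mul]; rfl

lemma act_inv_act (g : G) (v : V) : act g⁻¹ (act g v) = v := by
  rw [act_mul_apply, inv_mul_cancel, map_one]; rfl

lemma act_dist (hconn : Γ.Connected)
    (hadj : ∀ (g : G) (u v : V), Γ.Adj u v → Γ.Adj (act g u) (act g v))
    (g : G) (u v : V) : Γ.dist (act g u) (act g v) = Γ.dist u v :=
  dist_map_eq hconn (act g) (act g⁻¹) (hadj g) (hadj g⁻¹) (act_inv_act g) u v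

lemma act_dist_orbit (hconn : Γ.Connected)
    (hadj : ∀ (g : G) (u v : V), Γ.Adj u v → Γ.Adj (act g u) (act g v))
    (v₀ : V) (a b : G) :
    Γ.dist (act a v₀) (act b v₀) = Γ.dist v₀ (act (a⁻¹ * b) v₀) := by
  conv_lhs => rw [show act b v₀ = act a (act (a⁻¹ * b) v₀) by
    rw [act_mul_apply]; congr 1; group]
  exact act_dist hconn hadj a v₀ (act (a⁻¹ * b) v₀)

end action


/-- If a group `G` acts freely by automorphisms on a connected locally finite graph `Γ`
with finitely many orbits of vertices, then `G` is finitely generated and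
`e(Γ) = e(G)`: the end spaces of `Γ` and of any Cayley graph of `G` are in bijection. -/
theorem ends_of_graph_eq_ends_of_group {V G : Type*} [Group G]
    (Γ : SimpleGraph V) (hconn : Γ.Connected) (hlf : Γ.LocallyFinite)
    (act : G →* Equiv.Perm V)
    (hadj : ∀ (g : G) (u v : V), Γ.Adj u v → Γ.Adj (act g u) (act g v))
    (hfree : ∀ g : G, g ≠ 1 → ∀ v : V, act g v ≠ v)
    (horb : ∃ L : Set V, L.Finite ∧ ∀ v : V, ∃ g : G, ∃ l ∈ L, act g l = v) :
    (∃ S : Set G, S.Finite ∧ Subgroup.closure S = ⊤) ∧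
      ∀ S : Set G, S.Finite → Subgroup.closure S = ⊤ →
        Nonempty (Γ.end ≃ (cayleyGraph S).end) := by
  classical
  obtain ⟨L, hLfin, hLcov⟩ := horb
  haveI : Nonempty V := hconn.nonempty
  have hlfset : ∀ x : V, (Γ.neighborSet x).Finite := fun x => by
    letI := hlf x; exact (Γ.neighborSet x).toFinite
  set v₀ : V := Classical.arbitrary V with hv₀
  set R : ℕ := hLfin.toFinset.sup (fun l => Γ.dist v₀ l) with hRdef
  have hR : ∀ l ∈ L, Γ.dist v₀ l ≤ R := fun l hl =>
    Finset.le_sup (hLfin.mem_toFinset.mpr hl)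
  have horbclose : ∀ v : V, ∃ h : G, Γ.dist v (act h v₀) ≤ R := by
    intro v
    obtain ⟨g, l, hl, hgl⟩ := hLcov v
    refine ⟨g, ?_⟩
    rw [← hgl, act_dist hconn hadj, SimpleGraph.dist_comm]
    exact hR l hl
  -- finiteness of "orbit balls" in G
  have hTfin : ∀ r : ℕ, {t : G | Γ.dist v₀ (act t v₀) ≤ r}.Finite := by
    intro r
    refine Set.Finite.preimage (f := fun t : G => act t v₀) ?_ (ball_finite hconn hlfset v₀ r)
    intro a _ b _ hab
    by_contra hne
    refine hfree (b⁻¹ * a) (fun h1 => hne ?_) v₀ ?_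
    · have := congrArg (b * ·) h1; simpa [mul_assoc] using this
    · have hab' : act a v₀ = act b v₀ := hab
      rw [← act_mul_apply, hab', act_inv_act]
  -- finite generation
  set S₀ : Set G := {t : G | Γ.dist v₀ (act t v₀) ≤ 2*R+1} with hS₀
  have hgen₀ : ∀ g : G, g ∈ Subgroup.closure S₀ := by
    suffices H : ∀ (n : ℕ) (g : G), Γ.dist v₀ (act g v₀) = n → g ∈ Subgroup.closure S₀ by
      exact fun g => H _ g rfl
    intro n
    induction n using Nat.strong_induction_on with
    | _ n ih =>
      intro g hgn
      by_cases hsmall : Γ.dist v₀ (act g v₀) ≤ 2*R+1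
      · exact Subgroup.subset_closure hsmall
      · push_neg at hsmall
        have hn : 2*R+2 ≤ n := by omega
        obtain ⟨p, hp⟩ := (hconn v₀ (act g v₀)).exists_walk_length_eq_dist
        set w := p.getVert (R+1) with hw
        have h1 : Γ.dist v₀ w ≤ R+1 := dist_getVert_left p (R+1)
        have h2 : Γ.dist w (act g v₀) ≤ n - (R+1) := by
          have := dist_getVert_right p (R+1)
          rwa [hp, hgn] at this
        obtain ⟨h, hh⟩ := horbclose w
        have hhS : h ∈ S₀ := by
          have ht := hconn.dist_triangle (u := v₀) (v := w) (w := act h v₀)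
          simp only [hS₀, Set.mem_setOf_eq]
          omega
        have h3 : Γ.dist (act h v₀) (act g v₀) < n := by
          have ht := hconn.dist_triangle (u := act h v₀) (v := w) (w := act g v₀)
          have hcomm : Γ.dist (act h v₀) w = Γ.dist w (act h v₀) := SimpleGraph.dist_comm
          omega
        have h4 : Γ.dist v₀ (act (h⁻¹ * g) v₀) < n := by
          rwa [← act_dist_orbit hconn hadj]
        have h5 : h⁻¹ * g ∈ Subgroup.closure S₀ := ih _ h4 _ rfl
        have := mul_mem (Subgroup.subset_closure hhS) h5
        simpa using this
  refine ⟨⟨S₀, hTfin (2*R+1), (Subgroup.eq_top_iff' _).mpr hgen₀⟩, ?_⟩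
  intro S hS hgenS
  have hCc : (cayleyGraph S).Connected := cayley_connected hgenS
  -- quasi-isometry data
  set f : V → G := fun v => (hLcov v).choose with hf
  have hfspec : ∀ v : V, ∃ l ∈ L, act (f v) l = v := fun v => (hLcov v).choose_spec
  have hfR : ∀ v : V, Γ.dist (act (f v) v₀) v ≤ R := by
    intro v
    obtain ⟨l, hl, hfl⟩ := hfspec v
    have h1 : Γ.dist (act (f v) v₀) (act (f v) l) ≤ R := by
      rw [act_dist hconn hadj]; exact hR l hl
    rwa [hfl] at h1
  set C₂ : ℕ := (hTfin (2*R+1)).toFinset.sup (fun t => (cayleyGraph S).dist 1 t) with hC₂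
  have hT : ∀ a b : G, Γ.dist (act a v₀) (act b v₀) ≤ 2*R+1 → (cayleyGraph S).dist a b ≤ C₂ := by
    intro a b hd
    rw [act_dist_orbit hconn hadj] at hd
    have hmem : a⁻¹ * b ∈ (hTfin (2*R+1)).toFinset := (hTfin (2*R+1)).mem_toFinset.mpr hd
    have hle : (cayleyGraph S).dist 1 (a⁻¹ * b) ≤ C₂ :=
      Finset.le_sup (f := fun t => (cayleyGraph S).dist 1 t) hmem
    have htr := cayley_dist_translate hgenS a⁻¹ a b
    rw [inv_mul_cancel] at htr
    omega
  set C₃ : ℕ := hS.toFinset.sup (fun s => Γ.dist v₀ (act s v₀)) with hC₃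
  have hgb : ∀ a b : G, (cayleyGraph S).Adj a b → Γ.dist (act a v₀) (act b v₀) ≤ C₃ := by
    intro a b hab
    obtain ⟨-, hmem⟩ := hab
    rw [act_dist_orbit hconn hadj]
    rcases hmem with hmem | hmem
    · exact Finset.le_sup (f := fun s => Γ.dist v₀ (act s v₀)) (hS.mem_toFinset.mpr hmem)
    · have : Γ.dist v₀ (act (a⁻¹*b) v₀) = Γ.dist v₀ (act (a⁻¹*b)⁻¹ v₀) := by
        conv_lhs => rw [show Γ.dist v₀ (act (a⁻¹*b) v₀)
          = Γ.dist (act ((a⁻¹*b)⁻¹) v₀) (act ((a⁻¹*b)⁻¹) (act (a⁻¹*b) v₀)) from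
            (act_dist hconn hadj _ _ _).symm]
        rw [act_inv_act, SimpleGraph.dist_comm]
      rw [this]
      exact Finset.le_sup (f := fun s => Γ.dist v₀ (act s v₀)) (hS.mem_toFinset.mpr hmem)
  set C : ℕ := max (max C₂ C₃) (R+1) with hC
  refine ⟨CoarsePair.endEquiv (Gx := Γ) (Gy := cayleyGraph S) ?_⟩
  refine ⟨f, fun a => act a v₀, C, hconn, hCc, hlfset, cayley_locallyFinite hS, ?_, ?_, ?_, ?_⟩
  · -- hf
    intro u v huv
    have hd : Γ.dist (act (f u) v₀) (act (f v) v₀) ≤ 2*R+1 := by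
      have t1 := hconn.dist_triangle (u := act (f u) v₀) (v := u) (w := act (f v) v₀)
      have t2 := hconn.dist_triangle (u := u) (v := v) (w := act (f v) v₀)
      have d1 := hfR u
      have d2 := hfR v
      have d2' : Γ.dist v (act (f v) v₀) ≤ R := by rwa [SimpleGraph.dist_comm]
      have duv : Γ.dist u v = 1 := SimpleGraph.dist_eq_one_iff_adj.mpr huv
      omega
    exact (hT _ _ hd).trans (le_trans (le_max_left _ _) (le_max_left _ _))
  · -- hg
    intro a b hab
    exact (hgb a b hab).trans (le_trans (le_max_right _ _) (le_max_left _ _))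
  · -- hgf : Γ.dist (act (f x) v₀) x ≤ C
    intro x
    exact (hfR x).trans (le_trans (by omega) (le_max_right _ _))
  · -- hfg : (cayleyGraph S).dist (f (act a v₀)) a ≤ C
    intro a
    have := hfR (act a v₀)
    have hd : Γ.dist (act (f (act a v₀)) v₀) (act a v₀) ≤ 2*R+1 := by omega
    exact (hT _ _ hd).trans (le_trans (le_max_left _ _) (le_max_left _ _))
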